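/- Let $C^0, k_0, a_0 > 0$, $b(m,n) = k_0 - m - a_0 n$, $c(m,n) = 4 k_0 a_0 n$, and $P(m,n) = C^0(-b(m,n) + \sqrt{b(m,n)^2 + c(m,n)})$. Then the function $m \mapsto P(m,n)$ is strictly monotone increasing on $(0,\infty)$ for each fixed $n > 0$, and the function $n \mapsto P(m,n)$ is strictly monotone increasing on $(0,\infty)$ for each fixed $m > 0$. -/
import Mathlib

lemma key_4 (b1 b2 c : ℝ) (hb : b2 < b1) (hc : 0 < c) :
    -b1 + Real.sqrt (b1^2 + c) < -b2 + Real.sqrt (b2^2 + c) := by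
  have s1 := Real.sq_sqrt (by positivity : (0:ℝ) ≤ b1^2+c)
  have s2 := Real.sq_sqrt (by positivity : (0:ℝ) ≤ b2^2+c)
  have n1 := Real.sqrt_nonneg (b1^2+c)
  have n2 := Real.sqrt_nonneg (b2^2+c)
  have h1 : Real.sqrt (b1^2+c) > b1 := by nlinarith
  have h2 : Real.sqrt (b2^2+c) > b2 := by nlinarith
  nlinarith [mul_pos (sub_pos.mpr hb)
    (show (0:ℝ) < Real.sqrt (b1^2+c) + Real.sqrt (b2^2+c) - b1 - b2 by linarith)]

theorem stmt_4 (C0 k0 a0 : ℝ) (hC0 : 0 < C0) (hk0 : 0 < k0) (ha0 : 0 < a0)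
    (b c P : ℝ → ℝ → ℝ)
    (hb : ∀ m n, b m n = k0 - m - a0 * n)
    (hc : ∀ m n, c m n = 4 * k0 * a0 * n)
    (hP : ∀ m n, P m n = C0 * (-(b m n) + Real.sqrt ((b m n) ^ 2 + c m n))) :
    (∀ n : ℝ, 0 < n → StrictMonoOn (fun m => P m n) (Set.Ioi 0)) ∧
    (∀ m : ℝ, 0 < m → StrictMonoOn (fun n => P m n) (Set.Ioi 0)) := by
  constructor
  · intro n hn m1 _ m2 _ hm
    simp only [hP, hb, hc]
    have hcpos : 0 < 4 * k0 * a0 * n := by positivity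
    have := key_4 (k0 - m1 - a0 * n) (k0 - m2 - a0 * n) (4 * k0 * a0 * n)
      (by linarith) hcpos
    nlinarith
  · intro m _ n1 hn1 n2 _ hn
    simp only [hP, hb, hc]
    have hn1' : (0:ℝ) < n1 := hn1
    have hc1 : 0 < 4 * k0 * a0 * n1 := by positivity
    have step1 := key_4 (k0 - m - a0 * n1) (k0 - m - a0 * n2) (4 * k0 * a0 * n1)
      (by nlinarith) hc1
    have step2 : Real.sqrt ((k0 - m - a0 * n2)^2 + 4 * k0 * a0 * n1)
        < Real.sqrt ((k0 - m - a0 * n2)^2 + 4 * k0 * a0 * n2) := by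
      apply Real.sqrt_lt_sqrt (by positivity)
      nlinarith
    nlinarith
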